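/- Let P1 be a SPARQL graph pattern and P2 a BGP. Then for every RDF graph G, ⟦FE(P1,P2)⟧_G = {μ ∈ ⟦P1⟧_G | there exists μ' ∈ ⟦P2⟧_G with μ ∼ μ'}. -/

import Mathlib

/-!
Formalization of SPARQL graph-pattern syntax and semantics, following
Pérez et al. and the paper "SPARQL in N3".

* IRIs, blank nodes and literals are three pairwise disjoint infinite sets,
  packaged in the type `RTerm` (the set `T = I ∪ B ∪ L`).
* Variables form a further disjoint infinite set `Var`.
* A pattern term (`PTerm`) is an element of `T ∪ V`.
* A solution mapping is a partial function from variables to RDF terms,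
  modeled as `Var → Option RTerm`.
-/

namespace SparqlN3

/-- RDF terms: IRIs, blank nodes, literals — three disjoint infinite sets. -/
inductive RTerm : Type
  | iri : ℕ → RTerm
  | bnode : ℕ → RTerm
  | lit : ℕ → RTerm
deriving DecidableEq

/-- Variables (an infinite set, disjoint from `RTerm` by typing). -/
abbrev Var : Type := ℕ

/-- Elements of `T ∪ V`. -/
abbrev PTerm : Type := RTerm ⊕ Var

/-- Triple patterns: elements of `(T ∪ V) × (T ∪ V) × (T ∪ V)`. -/
abbrev TriplePat : Type := PTerm × PTerm × PTerm

/-- Ground RDF triples. -/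
abbrev Triple : Type := RTerm × RTerm × RTerm

/-- An RDF graph: a set of triples. -/
abbrev Graph : Type := Set Triple

/-- A basic graph pattern: a finite set of triple patterns. -/
abbrev BGP : Type := Finset TriplePat

/-- A (partial) mapping from variables to RDF terms. -/
abbrev Mapping : Type := Var → Option RTerm

/-- The domain of a mapping. -/
def mdom (μ : Mapping) : Set Var := {x | μ x ≠ none}

/-- A solution mapping has a finite domain. -/
def FiniteDom (μ : Mapping) : Prop := (mdom μ).Finite

/-- Compatibility of two mappings: they agree on the common domain. -/
def compat (μ₁ μ₂ : Mapping) : Prop :=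
  ∀ x a b, μ₁ x = some a → μ₂ x = some b → a = b

/-- Union `μ₁ ∪ μ₂` of two (compatible) mappings. -/
def munion (μ₁ μ₂ : Mapping) : Mapping :=
  fun x => (μ₁ x).elim (μ₂ x) some

def varsPT : PTerm → Finset Var
  | .inl _ => ∅
  | .inr v => {v}

/-- Variables of a triple pattern. -/
def varsTP (t : TriplePat) : Finset Var :=
  varsPT t.1 ∪ varsPT t.2.1 ∪ varsPT t.2.2

/-- Variables of a BGP. -/
def varsBGP (P : BGP) : Finset Var := P.biUnion varsTP

/-- Substitution on a pattern term: replace variables in the domain of `μ`. -/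
def substPT (μ : Mapping) : PTerm → PTerm
  | .inl t => .inl t
  | .inr v => (μ v).elim (.inr v) .inl

/-- Substitution `tμ` on a triple pattern (componentwise). -/
def substTP (μ : Mapping) (t : TriplePat) : TriplePat :=
  (substPT μ t.1, substPT μ t.2.1, substPT μ t.2.2)

/-- Substitution `Pμ` on a BGP (literal replacement of variables in `dom μ`). -/
def substBGP (μ : Mapping) (P : BGP) : BGP := P.image (substTP μ)

/-- View a ground triple as a triple pattern. -/
def toPat (t : Triple) : TriplePat := (.inl t.1, .inl t.2.1, .inl t.2.2)

/-- `InstIn G μ P` : the instantiation `Pμ` is contained in `G`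
(every triple pattern of `P` becomes, under `μ`, a ground triple of `G`). -/
def InstIn (G : Graph) (μ : Mapping) (P : BGP) : Prop :=
  ∀ tp ∈ P, ∃ t ∈ G, substTP μ tp = toPat t

/-- Evaluation of a BGP: `⟦P⟧_G = {μ | dom(μ) = var(P) ∧ Pμ ⊆ G}`. -/
def bgpEval (G : Graph) (P : BGP) : Set Mapping :=
  {μ | mdom μ = ↑(varsBGP P) ∧ InstIn G μ P}

/-- SPARQL graph patterns.  Filter conditions are modeled as predicates
on solution mappings. -/
inductive GP : Type
  | bgp : BGP → GP
  | and : GP → GP → GP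
  | union : GP → GP → GP
  | minus : GP → GP → GP
  | fe : GP → GP → GP
  | fne : GP → GP → GP
  | filter : GP → (Mapping → Prop) → GP
  | opt : GP → GP → (Mapping → Prop) → GP

/-- Substitution `Pμ` on a graph pattern, applied componentwise to triple
patterns and recursively through the constructors; for filters, the
predicate is composed with `μ`. -/
def substGP (μ : Mapping) : GP → GP
  | .bgp P => .bgp (substBGP μ P)
  | .and P₁ P₂ => .and (substGP μ P₁) (substGP μ P₂)
  | .union P₁ P₂ => .union (substGP μ P₁) (substGP μ P₂)
  | .minus P₁ P₂ => .minus (substGP μ P₁) (substGP μ P₂)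
  | .fe P₁ P₂ => .fe (substGP μ P₁) (substGP μ P₂)
  | .fne P₁ P₂ => .fne (substGP μ P₁) (substGP μ P₂)
  | .filter P R => .filter (substGP μ P) (fun ν => R (munion μ ν))
  | .opt P₁ P₂ R => .opt (substGP μ P₁) (substGP μ P₂) (fun ν => R (munion μ ν))

/-- Structural depth (used as termination measure for `eval`). -/
def depth : GP → ℕ
  | .bgp _ => 0
  | .and P₁ P₂ => max (depth P₁) (depth P₂) + 1
  | .union P₁ P₂ => max (depth P₁) (depth P₂) + 1
  | .minus P₁ P₂ => max (depth P₁) (depth P₂) + 1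
  | .fe P₁ P₂ => max (depth P₁) (depth P₂) + 1
  | .fne P₁ P₂ => max (depth P₁) (depth P₂) + 1
  | .filter P _ => depth P + 1
  | .opt P₁ P₂ _ => max (depth P₁) (depth P₂) + 1

theorem depth_substGP (μ : Mapping) (P : GP) : depth (substGP μ P) = depth P := by
  induction P <;> simp [substGP, depth, *]

/-- The scope `sv` of a graph pattern. -/
def sv : GP → Finset Var
  | .bgp P => varsBGP P
  | .and P₁ P₂ => sv P₁ ∪ sv P₂
  | .union P₁ P₂ => sv P₁ ∪ sv P₂
  | .minus P₁ _ => sv P₁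
  | .fe P₁ _ => sv P₁
  | .fne P₁ _ => sv P₁
  | .filter P _ => sv P
  | .opt P₁ P₂ _ => sv P₁ ∪ sv P₂

/-- The variables `var(P)` occurring in a graph pattern. -/
def varsGP : GP → Finset Var
  | .bgp P => varsBGP P
  | .and P₁ P₂ => varsGP P₁ ∪ varsGP P₂
  | .union P₁ P₂ => varsGP P₁ ∪ varsGP P₂
  | .minus P₁ P₂ => varsGP P₁ ∪ varsGP P₂
  | .fe P₁ P₂ => varsGP P₁ ∪ varsGP P₂
  | .fne P₁ P₂ => varsGP P₁ ∪ varsGP P₂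
  | .filter P _ => varsGP P
  | .opt P₁ P₂ _ => varsGP P₁ ∪ varsGP P₂

/-- Evaluation `⟦P⟧_G` of SPARQL graph patterns over an RDF graph `G`. -/
def eval (G : Graph) : GP → Set Mapping
  | .bgp P => bgpEval G P
  | .and P₁ P₂ =>
      {μ | ∃ μ₁ ∈ eval G P₁, ∃ μ₂ ∈ eval G P₂, compat μ₁ μ₂ ∧ μ = munion μ₁ μ₂}
  | .union P₁ P₂ => eval G P₁ ∪ eval G P₂
  | .minus P₁ P₂ =>
      {μ ∈ eval G P₁ | ∀ μ' ∈ eval G P₂, ¬ compat μ μ' ∨ mdom μ ∩ mdom μ' = ∅}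
  | .fe P₁ P₂ =>
      {μ ∈ eval G P₁ | (eval G (substGP μ P₂)).Nonempty}
  | .fne P₁ P₂ =>
      {μ ∈ eval G P₁ | eval G (substGP μ P₂) = ∅}
  | .filter P R => {μ ∈ eval G P | R μ}
  | .opt P₁ P₂ R =>
      {μ | ∃ μ₁ ∈ eval G P₁, ∃ μ₂ ∈ eval G P₂,
          compat μ₁ μ₂ ∧ R (munion μ₁ μ₂) ∧ μ = munion μ₁ μ₂}
        ∪ {μ₁ ∈ eval G P₁ | ¬ ∃ μ₂ ∈ eval G P₂, compat μ₁ μ₂ ∧ R (munion μ₁ μ₂)}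
termination_by P => depth P
decreasing_by all_goals (simp [depth_substGP, depth]; try omega)

/-- A pattern contains no UNION and no OPT subpattern. -/
def NoUnionOpt : GP → Prop
  | .bgp _ => True
  | .and P₁ P₂ => NoUnionOpt P₁ ∧ NoUnionOpt P₂
  | .union _ _ => False
  | .minus P₁ P₂ => NoUnionOpt P₁ ∧ NoUnionOpt P₂
  | .fe P₁ P₂ => NoUnionOpt P₁ ∧ NoUnionOpt P₂
  | .fne P₁ P₂ => NoUnionOpt P₁ ∧ NoUnionOpt P₂
  | .filter P _ => NoUnionOpt P
  | .opt _ _ _ => False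

/-- Renaming of variables in a pattern term. -/
def renamePT (σ : Var → Var) : PTerm → PTerm
  | .inl t => .inl t
  | .inr v => .inr (σ v)

/-- Renaming of variables in a triple pattern. -/
def renameTP (σ : Var → Var) (t : TriplePat) : TriplePat :=
  (renamePT σ t.1, renamePT σ t.2.1, renamePT σ t.2.2)

/-- Renaming `Qσ` of variables in a BGP. -/
def renameBGP (σ : Var → Var) (P : BGP) : BGP := P.image (renameTP σ)

/-- Restriction of a mapping to a set of variables. -/
def restrict (μ : Mapping) (S : Finset Var) : Mapping :=
  fun x => if x ∈ S then μ x else none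

/-!
Substitution composes with union: `(Pμ)ν = P(μ ∪ ν)`, so a solution `ν` of `P₂μ` yields the
solution `(μ ∪ ν)|var(P₂)` of `P₂`, which is compatible with `μ`. Conversely, a solution `μ'`
of `P₂` compatible with `μ` agrees with `μ ∪ μ'` on `var(P₂)`, so its restriction to
`var(P₂μ) = var(P₂) \ dom μ` solves `P₂μ`.
-/

lemma mdom_munion (μ ν : Mapping) : mdom (munion μ ν) = mdom μ ∪ mdom ν := by
  ext x
  cases h : μ x <;> simp [mdom, munion, h]

lemma mdom_restrict (μ : Mapping) (S : Finset Var) : mdom (restrict μ S) = ↑S ∩ mdom μ := by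
  ext x
  by_cases hx : x ∈ S <;> simp [mdom, restrict, hx]

lemma restrict_of_mem {μ : Mapping} {S : Finset Var} {x : Var} (hx : x ∈ S) :
    restrict μ S x = μ x := if_pos hx

lemma compat_munion_self (μ ν : Mapping) : compat μ (munion μ ν) := by
  intro x a b ha hb
  simpa [munion, ha] using hb

lemma compat_restrict {μ ν : Mapping} (h : compat μ ν) (S : Finset Var) :
    compat μ (restrict ν S) := by
  intro x a b ha hb
  by_cases hx : x ∈ S
  · exact h x a b ha (by rwa [restrict_of_mem hx] at hb)
  · simp [restrict, hx] at hb

lemma mem_varsPT_subst (μ : Mapping) (p : PTerm) (v : Var) :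
    v ∈ varsPT (substPT μ p) ↔ v ∈ varsPT p ∧ μ v = none := by
  rcases p with t | w
  · simp [varsPT, substPT]
  · cases h : μ w with
    | none => simp only [substPT, h, Option.elim, varsPT, Finset.mem_singleton]; grind
    | some a => simp only [substPT, h, Option.elim, varsPT]; grind

lemma mem_varsTP_subst (μ : Mapping) (tp : TriplePat) (v : Var) :
    v ∈ varsTP (substTP μ tp) ↔ v ∈ varsTP tp ∧ μ v = none := by
  simp only [varsTP, substTP, Finset.mem_union, mem_varsPT_subst]
  tauto

lemma mem_varsBGP_subst (μ : Mapping) (P : BGP) (v : Var) :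
    v ∈ varsBGP (substBGP μ P) ↔ v ∈ varsBGP P ∧ μ v = none := by
  simp only [varsBGP, substBGP, Finset.mem_biUnion, Finset.exists_mem_image, mem_varsTP_subst]
  tauto

lemma substPT_munion (μ ν : Mapping) (p : PTerm) :
    substPT ν (substPT μ p) = substPT (munion μ ν) p := by
  rcases p with t | v
  · rfl
  · cases h : μ v <;> simp [substPT, munion, h]

lemma substTP_munion (μ ν : Mapping) (tp : TriplePat) :
    substTP ν (substTP μ tp) = substTP (munion μ ν) tp := by
  simp [substTP, substPT_munion]

lemma substPT_congr {μ₁ μ₂ : Mapping} {p : PTerm}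
    (h : ∀ v ∈ varsPT p, μ₁ v = μ₂ v) : substPT μ₁ p = substPT μ₂ p := by
  rcases p with t | v
  · rfl
  · simp [substPT, h v (by simp [varsPT])]

lemma substTP_congr {μ₁ μ₂ : Mapping} {tp : TriplePat}
    (h : ∀ v ∈ varsTP tp, μ₁ v = μ₂ v) : substTP μ₁ tp = substTP μ₂ tp := by
  simp only [substTP, Prod.mk.injEq]
  refine ⟨?_, ?_, ?_⟩ <;>
    exact substPT_congr fun v hv => h v (by simp [varsTP, hv])

lemma instIn_congr {G : Graph} {μ₁ μ₂ : Mapping} {P : BGP}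
    (h : ∀ v ∈ varsBGP P, μ₁ v = μ₂ v) : InstIn G μ₁ P ↔ InstIn G μ₂ P := by
  have hP : ∀ tp ∈ P, substTP μ₁ tp = substTP μ₂ tp := fun tp htp =>
    substTP_congr fun v hv => h v (Finset.mem_biUnion.2 ⟨tp, htp, hv⟩)
  exact forall₂_congr fun tp htp => by rw [hP tp htp]

lemma instIn_substBGP {G : Graph} {μ ν : Mapping} {P : BGP} :
    InstIn G ν (substBGP μ P) ↔ InstIn G (munion μ ν) P := by
  simp only [InstIn, substBGP, Finset.forall_mem_image, substTP_munion]

lemma exists_compat_of_mem_bgpEval_substBGP {G : Graph} {μ ν : Mapping} {P : BGP}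
    (hν : ν ∈ bgpEval G (substBGP μ P)) : ∃ μ' ∈ bgpEval G P, compat μ μ' := by
  obtain ⟨hdom, hinst⟩ := hν
  refine ⟨restrict (munion μ ν) (varsBGP P), ⟨?_, ?_⟩,
    compat_restrict (compat_munion_self μ ν) _⟩
  · rw [mdom_restrict, mdom_munion, hdom, Set.inter_eq_left]
    intro v hv
    by_cases hμv : μ v = none
    · exact Or.inr ((mem_varsBGP_subst μ P v).2 ⟨hv, hμv⟩)
    · exact Or.inl hμv
  · exact (instIn_congr fun v hv => restrict_of_mem hv).2 (instIn_substBGP.1 hinst)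

lemma bgpEval_substBGP_nonempty_of_compat {G : Graph} {μ μ' : Mapping} {P : BGP}
    (hμ' : μ' ∈ bgpEval G P) (hc : compat μ μ') : (bgpEval G (substBGP μ P)).Nonempty := by
  obtain ⟨hdom, hinst⟩ := hμ'
  have hsub : ∀ v, v ∈ varsBGP (substBGP μ P) → v ∈ varsBGP P := fun v hv =>
    ((mem_varsBGP_subst μ P v).1 hv).1
  refine ⟨restrict μ' (varsBGP (substBGP μ P)), ?_, ?_⟩
  · rw [mdom_restrict, hdom, Set.inter_eq_left]
    exact hsub
  · refine instIn_substBGP.2 ((instIn_congr fun v hv => ?_).2 hinst)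
    cases hμv : μ v with
    | none => simp [munion, hμv, restrict_of_mem ((mem_varsBGP_subst μ P v).2 ⟨hv, hμv⟩)]
    | some a =>
      obtain ⟨b, hb⟩ := Option.ne_none_iff_exists'.1 (show v ∈ mdom μ' from hdom ▸ hv)
      simp [munion, hμv, hb, hc v a b hμv hb]

theorem bgpEval_substBGP_nonempty_iff {G : Graph} {μ : Mapping} {P : BGP} :
    (bgpEval G (substBGP μ P)).Nonempty ↔ ∃ μ' ∈ bgpEval G P, compat μ μ' :=
  ⟨fun ⟨_, hν⟩ => exists_compat_of_mem_bgpEval_substBGP hν,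
    fun ⟨_, hμ', hc⟩ => bgpEval_substBGP_nonempty_of_compat hμ' hc⟩

/-- For a graph pattern `P₁` and a BGP `P₂`,
`⟦FE(P₁,P₂)⟧_G = {μ ∈ ⟦P₁⟧_G | ∃ μ' ∈ ⟦P₂⟧_G, μ ∼ μ'}`. -/
theorem fe_eval_eq (P₁ : GP) (P₂ : BGP) (G : Graph) :
    eval G (.fe P₁ (.bgp P₂)) =
      {μ ∈ eval G P₁ | ∃ μ' ∈ bgpEval G P₂, compat μ μ'} := by
  ext μ
  simp only [eval, substGP, Set.mem_sep_iff, bgpEval_substBGP_nonempty_iff]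

end SparqlN3
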